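/- arXiv:2208.07126 — 2 statements merged into one kernel-verified Lean document; each statement's English description precedes it below -/
import Mathlib

section
/- Assume that for each (x,y) ∈ E₁ × E₂ the functions (p,z) ↦ f̃(p,z,x) and (p,w) ↦ g̃(p,w,y) are upper semi-continuous (jointly in their first two variables). Then SEP(f,g,C,Q) is Levitin–Polyak well-posed by perturbations if and only if S(ε) ≠ ∅ for every ε > 0 and diam(S(ε)) → 0 as ε → 0⁺. -/
open Filter Metric Topology Set

/-- The solution set of the split equilibrium problem SEP(f,g,C,Q). -/
def SEPSol {E₁ E₂ : Type*} [NormedAddCommGroup E₁] [NormedSpace ℝ E₁]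
    [NormedAddCommGroup E₂] [NormedSpace ℝ E₂]
    (C : Set E₁) (Q : Set E₂) (A : E₁ →L[ℝ] E₂)
    (f : E₁ → E₁ → ℝ) (g : E₂ → E₂ → ℝ) : Set (E₁ × E₂) :=
  {u | u.1 ∈ C ∧ u.2 ∈ Q ∧ u.2 = A u.1 ∧
    (∀ x ∈ C, 0 ≤ f u.1 x) ∧ (∀ y ∈ Q, 0 ≤ g u.2 y)}

/-- The approximate solution set S(ε) of the perturbed split equilibrium problem,
where the perturbation parameter ranges over the closed ball M of radius `r`
centered at `pstar`, intersected with the closed ball of radius `ε` around `pstar`. -/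
def approxSol {E₁ E₂ N : Type*} [NormedAddCommGroup E₁] [NormedSpace ℝ E₁]
    [NormedAddCommGroup E₂] [NormedSpace ℝ E₂] [NormedAddCommGroup N] [NormedSpace ℝ N]
    (C : Set E₁) (Q : Set E₂) (A : E₁ →L[ℝ] E₂) (pstar : N) (r : ℝ)
    (ft : N → E₁ → E₁ → ℝ) (gt : N → E₂ → E₂ → ℝ) (ε : ℝ) : Set (E₁ × E₂) :=
  {u | ∃ p : N, ‖p - pstar‖ ≤ r ∧ ‖p - pstar‖ ≤ ε ∧
    infDist u.1 C ≤ ε ∧ infDist u.2 Q ≤ ε ∧ ‖u.2 - A u.1‖ ≤ ε ∧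
    (∀ x ∈ C, -ε ≤ ft p u.1 x) ∧ (∀ y ∈ Q, -ε ≤ gt p u.2 y)}

/-- `u` is a generalized approximating sequence corresponding to the parameter
sequence `p` (which lies in the ball M of radius `r` around `pstar` and converges
to `pstar`) for the split equilibrium problem. -/
def GenApproxSeq {E₁ E₂ N : Type*} [NormedAddCommGroup E₁] [NormedSpace ℝ E₁]
    [NormedAddCommGroup E₂] [NormedSpace ℝ E₂] [NormedAddCommGroup N] [NormedSpace ℝ N]
    (C : Set E₁) (Q : Set E₂) (A : E₁ →L[ℝ] E₂) (pstar : N) (r : ℝ)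
    (ft : N → E₁ → E₁ → ℝ) (gt : N → E₂ → E₂ → ℝ)
    (p : ℕ → N) (u : ℕ → E₁ × E₂) : Prop :=
  (∀ n, ‖p n - pstar‖ ≤ r) ∧ Tendsto p atTop (nhds pstar) ∧
  ∃ ε : ℕ → ℝ, (∀ n, 0 < ε n) ∧ Tendsto ε atTop (nhds 0) ∧
    ∀ n, infDist (u n).1 C ≤ ε n ∧ infDist (u n).2 Q ≤ ε n ∧
      ‖(u n).2 - A (u n).1‖ ≤ ε n ∧
      (∀ x ∈ C, -(ε n) ≤ ft (p n) (u n).1 x) ∧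
      (∀ y ∈ Q, -(ε n) ≤ gt (p n) (u n).2 y)

/-- SEP(f,g,C,Q) is Levitin–Polyak well-posed by perturbations: the solution set is a
singleton and every generalized approximating sequence converges to the unique solution. -/
def LPWellPosedPerturb {E₁ E₂ N : Type*} [NormedAddCommGroup E₁] [NormedSpace ℝ E₁]
    [NormedAddCommGroup E₂] [NormedSpace ℝ E₂] [NormedAddCommGroup N] [NormedSpace ℝ N]
    (C : Set E₁) (Q : Set E₂) (A : E₁ →L[ℝ] E₂) (pstar : N) (r : ℝ)
    (ft : N → E₁ → E₁ → ℝ) (gt : N → E₂ → E₂ → ℝ) : Prop :=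
  ∃ ustar : E₁ × E₂, SEPSol C Q A (ft pstar) (gt pstar) = {ustar} ∧
    ∀ (p : ℕ → N) (u : ℕ → E₁ × E₂), GenApproxSeq C Q A pstar r ft gt p u →
      Tendsto u atTop (nhds ustar)

/-- SEP(f,g,C,Q) is Levitin–Polyak well-posed by perturbations in the generalized sense:
the solution set is nonempty and every generalized approximating sequence has a
subsequence converging to some solution. -/
def GenLPWellPosedPerturb {E₁ E₂ N : Type*} [NormedAddCommGroup E₁] [NormedSpace ℝ E₁]
    [NormedAddCommGroup E₂] [NormedSpace ℝ E₂] [NormedAddCommGroup N] [NormedSpace ℝ N]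
    (C : Set E₁) (Q : Set E₂) (A : E₁ →L[ℝ] E₂) (pstar : N) (r : ℝ)
    (ft : N → E₁ → E₁ → ℝ) (gt : N → E₂ → E₂ → ℝ) : Prop :=
  (SEPSol C Q A (ft pstar) (gt pstar)).Nonempty ∧
    ∀ (p : ℕ → N) (u : ℕ → E₁ × E₂), GenApproxSeq C Q A pstar r ft gt p u →
      ∃ ustar ∈ SEPSol C Q A (ft pstar) (gt pstar), ∃ φ : ℕ → ℕ, StrictMono φ ∧
        Tendsto (u ∘ φ) atTop (nhds ustar)

/-- The Kuratowski measure of noncompactness: the infimum of all `ε > 0` such that the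
set can be covered by finitely many sets, each of diameter `< ε`. -/
noncomputable def kuratowskiMNC {X : Type*} [PseudoEMetricSpace X] (s : Set X) : ENNReal :=
  sInf {ε : ENNReal | 0 < ε ∧ ∃ t : Finset (Set X), (s ⊆ ⋃ a ∈ t, (a : Set X)) ∧
    ∀ a ∈ t, EMetric.diam a < ε}

/-!
The sets S(ε) shrink as ε ↓ 0 and contain every solution. A sequence with uₙ ∈ S(εₙ), εₙ → 0, is
a generalized approximating sequence, and conversely; by closedness of C, Q and upper
semicontinuity of f̃, g̃, the limit of such a sequence is a solution. Well-posedness therefore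
forces S(ε) into ever smaller balls around the solution, so diam S(ε) → 0. Conversely, if the
diameters shrink, a selection uₙ ∈ S(εₙ) along a decreasing εₙ → 0 is Cauchy and its limit is a
solution; any other approximating sequence, or any other solution, lies in the same sets S(δₙ),
whose diameters tend to 0, so it converges to (equals) that limit.
-/

theorem UpperSemicontinuousAt.le_of_tendsto {α β ι : Type*} [TopologicalSpace α] [LinearOrder β]
    [DenselyOrdered β] [TopologicalSpace β] [OrderTopology β] {f : α → β} {a : α}
    (hf : UpperSemicontinuousAt f a) {l : Filter ι} [l.NeBot] {x : ι → α} {c : ι → β} {c₀ : β}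
    (hx : Tendsto x l (𝓝 a)) (hc : Tendsto c l (𝓝 c₀)) (h : ∀ᶠ i in l, c i ≤ f (x i)) :
    c₀ ≤ f a := by
  by_contra! hlt
  obtain ⟨y, hfy, hyc⟩ := exists_between hlt
  obtain ⟨i, hfi, hci, hi⟩ :=
    ((hx.eventually (hf y hfy)).and ((hc.eventually (eventually_gt_nhds hyc)).and h)).exists
  exact (hfi.trans hci).not_ge hi

theorem IsClosed.mem_of_tendsto_of_infDist_le {E ι : Type*} [PseudoMetricSpace E] {s : Set E}
    (hs : IsClosed s) (hne : s.Nonempty) {l : Filter ι} [l.NeBot] {x : ι → E} {a : E}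
    {ε : ι → ℝ} (hx : Tendsto x l (𝓝 a)) (hε : Tendsto ε l (𝓝 0))
    (h : ∀ i, infDist (x i) s ≤ ε i) : a ∈ s :=
  (hs.mem_iff_infDist_zero hne).2 <| le_antisymm
    (le_of_tendsto_of_tendsto' (((continuous_infDist_pt s).tendsto a).comp hx) hε h) infDist_nonneg

section ediam

variable {X ι : Type*} [PseudoEMetricSpace X]

theorem tendsto_of_ediam_tendsto_zero {l : Filter ι} {S : ι → Set X} {x : X} {u : ι → X}
    (hx : ∀ i, x ∈ S i) (hu : ∀ i, u i ∈ S i) (h : Tendsto (fun i => ediam (S i)) l (𝓝 0)) :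
    Tendsto u l (𝓝 x) :=
  tendsto_iff_edist_tendsto_0.2 <| tendsto_of_tendsto_of_tendsto_of_le_of_le tendsto_const_nhds h
    (fun _ => zero_le) fun i => edist_le_ediam_of_mem (hu i) (hx i)

theorem cauchySeq_of_antitone_of_ediam_tendsto_zero {S : ℕ → Set X} (hS : Antitone S)
    {u : ℕ → X} (hu : ∀ n, u n ∈ S n) (h : Tendsto (fun n => ediam (S n)) atTop (𝓝 0)) :
    CauchySeq u := by
  refine EMetric.cauchySeq_iff.2 fun δ hδ => ?_
  obtain ⟨N, hN⟩ := (h.eventually (gt_mem_nhds hδ)).exists_forall_of_atTop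
  exact ⟨N, fun m hm n hn =>
    (edist_le_ediam_of_mem (hS hm (hu m)) (hS hn (hu n))).trans_lt (hN N le_rfl)⟩

theorem tendsto_ediam_zero_of_forall_seq_tendsto {l : Filter ι} [l.IsCountablyGenerated]
    {S : ι → Set X} {x : X}
    (h : ∀ (i : ℕ → ι) (u : ℕ → X), Tendsto i atTop l → (∀ n, u n ∈ S (i n)) →
      Tendsto u atTop (𝓝 x)) :
    Tendsto (fun i => ediam (S i)) l (𝓝 0) := by
  have hball : ∀ δ > 0, ∀ᶠ i in l, ∀ y ∈ S i, edist y x < δ := by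
    intro δ hδ
    by_contra hfreq
    obtain ⟨i, hi, hfar⟩ := exists_seq_forall_of_frequently (not_eventually.1 hfreq)
    push Not at hfar
    choose u hu hδu using hfar
    obtain ⟨n, hn⟩ :=
      ((tendsto_iff_edist_tendsto_0.1 (h i u hi hu)).eventually (gt_mem_nhds hδ)).exists
    exact (hδu n).not_gt hn
  refine ENNReal.tendsto_nhds_zero.2 fun δ hδ => ?_
  filter_upwards [hball (δ / 2) (ENNReal.half_pos hδ.ne')] with i hi
  refine ediam_le fun y hy z hz => ?_
  calc edist y z ≤ edist y x + edist z x := edist_triangle_right y z x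
    _ ≤ δ / 2 + δ / 2 := add_le_add (hi y hy).le (hi z hz).le
    _ = δ := ENNReal.add_halves δ

end ediam

section SplitEquilibrium

variable {E₁ E₂ N : Type*} [NormedAddCommGroup E₁] [NormedSpace ℝ E₁]
  [NormedAddCommGroup E₂] [NormedSpace ℝ E₂] [NormedAddCommGroup N] [NormedSpace ℝ N]
  {C : Set E₁} {Q : Set E₂} {A : E₁ →L[ℝ] E₂} {pstar : N} {r : ℝ}
  {ft : N → E₁ → E₁ → ℝ} {gt : N → E₂ → E₂ → ℝ}

theorem approxSol_mono : Monotone (approxSol C Q A pstar r ft gt) := by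
  rintro ε ε' hε u ⟨p, hpr, hpε, hC, hQ, hA, hf, hg⟩
  exact ⟨p, hpr, hpε.trans hε, hC.trans hε, hQ.trans hε, hA.trans hε,
    fun x hx => (neg_le_neg hε).trans (hf x hx), fun y hy => (neg_le_neg hε).trans (hg y hy)⟩

theorem nonneg_of_mem_approxSol {ε : ℝ} {u : E₁ × E₂}
    (hu : u ∈ approxSol C Q A pstar r ft gt ε) : 0 ≤ ε :=
  let ⟨_, _, hpε, _⟩ := hu
  (norm_nonneg _).trans hpε

theorem sepSol_subset_approxSol (hr : 0 ≤ r) {ε : ℝ} (hε : 0 ≤ ε) :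
    SEPSol C Q A (ft pstar) (gt pstar) ⊆ approxSol C Q A pstar r ft gt ε := by
  rintro u ⟨hC, hQ, hA, hf, hg⟩
  refine ⟨pstar, by simpa using hr, by simpa using hε, by rwa [infDist_zero_of_mem hC],
    by rwa [infDist_zero_of_mem hQ], by simpa [hA] using hε, fun x hx => ?_, fun y hy => ?_⟩
  · linarith [hf x hx]
  · linarith [hg y hy]

theorem exists_genApproxSeq_of_mem_approxSol {ε : ℕ → ℝ} (hε : Tendsto ε atTop (𝓝 0))
    {u : ℕ → E₁ × E₂} (hu : ∀ n, u n ∈ approxSol C Q A pstar r ft gt (ε n)) :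
    ∃ p, GenApproxSeq C Q A pstar r ft gt p u := by
  choose p hpr hpε hC hQ hA hf hg using hu
  -- `ε n` may vanish, while a generalized approximating sequence needs strictly positive bounds
  set δ : ℕ → ℝ := fun n => ε n + 1 / (n + 1)
  have hεδ : ∀ n, ε n ≤ δ n := fun n => le_add_of_nonneg_right (by positivity)
  refine ⟨p, hpr, ?_, δ, fun n => ?_, ?_, fun n => ⟨(hC n).trans (hεδ n), (hQ n).trans (hεδ n),
    (hA n).trans (hεδ n), fun x hx => (neg_le_neg (hεδ n)).trans (hf n x hx),
    fun y hy => (neg_le_neg (hεδ n)).trans (hg n y hy)⟩⟩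
  · exact tendsto_iff_norm_sub_tendsto_zero.2 (squeeze_zero (fun _ => norm_nonneg _) hpε hε)
  · exact add_pos_of_nonneg_of_pos ((norm_nonneg _).trans (hpε n)) Nat.one_div_pos_of_nat
  · simpa [δ] using hε.add tendsto_one_div_add_atTop_nhds_zero_nat

theorem GenApproxSeq.exists_mem_approxSol {p : ℕ → N} {u : ℕ → E₁ × E₂}
    (hu : GenApproxSeq C Q A pstar r ft gt p u) :
    ∃ δ : ℕ → ℝ, Tendsto δ atTop (𝓝[>] 0) ∧ ∀ n, u n ∈ approxSol C Q A pstar r ft gt (δ n) := by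
  obtain ⟨hpr, hp, ε, hεpos, hε, hmem⟩ := hu
  refine ⟨fun n => max (ε n) ‖p n - pstar‖, tendsto_nhdsWithin_iff.2 ⟨?_,
    Eventually.of_forall fun n => lt_max_of_lt_left (hεpos n)⟩, fun n => ?_⟩
  · simpa using hε.max (tendsto_iff_norm_sub_tendsto_zero.1 hp)
  · obtain ⟨hC, hQ, hA, hf, hg⟩ := hmem n
    have hε : -max (ε n) ‖p n - pstar‖ ≤ -ε n := neg_le_neg (le_max_left _ _)
    exact ⟨p n, hpr n, le_max_right _ _, hC.trans (le_max_left _ _), hQ.trans (le_max_left _ _),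
      hA.trans (le_max_left _ _), fun x hx => hε.trans (hf x hx), fun y hy => hε.trans (hg y hy)⟩

theorem GenApproxSeq.mem_sepSol_of_tendsto (hCne : C.Nonempty) (hCcl : IsClosed C)
    (hQne : Q.Nonempty) (hQcl : IsClosed Q)
    (hfusc : ∀ x : E₁, UpperSemicontinuous fun q : N × E₁ => ft q.1 q.2 x)
    (hgusc : ∀ y : E₂, UpperSemicontinuous fun q : N × E₂ => gt q.1 q.2 y)
    {p : ℕ → N} {u : ℕ → E₁ × E₂} (hu : GenApproxSeq C Q A pstar r ft gt p u) {w : E₁ × E₂}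
    (hw : Tendsto u atTop (𝓝 w)) : w ∈ SEPSol C Q A (ft pstar) (gt pstar) := by
  obtain ⟨-, hp, ε, -, hε, hmem⟩ := hu
  choose hC hQ hA hf hg using hmem
  have hu₁ : Tendsto (fun n => (u n).1) atTop (𝓝 w.1) := (continuous_fst.tendsto w).comp hw
  have hu₂ : Tendsto (fun n => (u n).2) atTop (𝓝 w.2) := (continuous_snd.tendsto w).comp hw
  have hneg : Tendsto (fun n => -ε n) atTop (𝓝 0) := by simpa using hε.neg
  refine ⟨hCcl.mem_of_tendsto_of_infDist_le hCne hu₁ hε hC,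
    hQcl.mem_of_tendsto_of_infDist_le hQne hu₂ hε hQ, ?_, fun x hx => ?_, fun y hy => ?_⟩
  · have hA' : ‖w.2 - A w.1‖ ≤ 0 :=
      le_of_tendsto_of_tendsto' (hu₂.sub ((A.continuous.tendsto _).comp hu₁)).norm hε hA
    exact sub_eq_zero.1 (norm_le_zero_iff.1 hA')
  · exact UpperSemicontinuousAt.le_of_tendsto (hfusc x (pstar, w.1)) (hp.prodMk_nhds hu₁) hneg
      (Eventually.of_forall fun n => hf n x hx)
  · exact UpperSemicontinuousAt.le_of_tendsto (hgusc y (pstar, w.2)) (hp.prodMk_nhds hu₂) hneg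
      (Eventually.of_forall fun n => hg n y hy)

theorem sepSol_nonempty_of_ediam_approxSol_tendsto_zero [CompleteSpace E₁] [CompleteSpace E₂]
    (hCne : C.Nonempty) (hCcl : IsClosed C) (hQne : Q.Nonempty) (hQcl : IsClosed Q)
    (hfusc : ∀ x : E₁, UpperSemicontinuous fun q : N × E₁ => ft q.1 q.2 x)
    (hgusc : ∀ y : E₂, UpperSemicontinuous fun q : N × E₂ => gt q.1 q.2 y)
    (hne : ∀ ε : ℝ, 0 < ε → (approxSol C Q A pstar r ft gt ε).Nonempty)
    (hdiam : Tendsto (fun ε => ediam (approxSol C Q A pstar r ft gt ε)) (𝓝[>] 0) (𝓝 0)) :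
    (SEPSol C Q A (ft pstar) (gt pstar)).Nonempty := by
  obtain ⟨ε, hanti, hpos, hε⟩ := exists_seq_strictAnti_tendsto_nhdsWithin (0 : ℝ)
  choose u hu using fun n => hne (ε n) (hpos n)
  obtain ⟨w, hw⟩ := cauchySeq_tendsto_of_complete <| cauchySeq_of_antitone_of_ediam_tendsto_zero
    (fun _ _ hmn => approxSol_mono (hanti.antitone hmn)) hu (hdiam.comp hε)
  obtain ⟨p, hp⟩ := exists_genApproxSeq_of_mem_approxSol (hε.mono_right nhdsWithin_le_nhds) hu
  exact ⟨w, hp.mem_sepSol_of_tendsto hCne hCcl hQne hQcl hfusc hgusc hw⟩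

end SplitEquilibrium

theorem sep_lp_wellposed_iff_approx_nonempty_diam_tendsto_zero_general
    {E₁ E₂ N : Type*} [NormedAddCommGroup E₁] [NormedSpace ℝ E₁] [CompleteSpace E₁]
    [NormedAddCommGroup E₂] [NormedSpace ℝ E₂] [CompleteSpace E₂]
    [NormedAddCommGroup N] [NormedSpace ℝ N]
    (C : Set E₁) (Q : Set E₂) (hCne : C.Nonempty) (hCcl : IsClosed C)
    (hQne : Q.Nonempty) (hQcl : IsClosed Q)
    (A : E₁ →L[ℝ] E₂) (pstar : N) (r : ℝ) (hr : 0 < r)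
    (ftil : N → E₁ → E₁ → ℝ) (gtil : N → E₂ → E₂ → ℝ)
    (hfusc : ∀ x : E₁, UpperSemicontinuous fun q : N × E₁ => ftil q.1 q.2 x)
    (hgusc : ∀ y : E₂, UpperSemicontinuous fun q : N × E₂ => gtil q.1 q.2 y) :
    LPWellPosedPerturb C Q A pstar r ftil gtil ↔
      (∀ ε : ℝ, 0 < ε → (approxSol C Q A pstar r ftil gtil ε).Nonempty) ∧
        Tendsto (fun ε : ℝ => EMetric.diam (approxSol C Q A pstar r ftil gtil ε))
          (𝓝[>] (0 : ℝ)) (nhds 0) := by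
  constructor
  · rintro ⟨ustar, hsol, hconv⟩
    have hmem : ∀ ε, 0 ≤ ε → ustar ∈ approxSol C Q A pstar r ftil gtil ε := fun ε hε =>
      sepSol_subset_approxSol hr.le hε (eq_singleton_iff_unique_mem.1 hsol).1
    refine ⟨fun ε hε => ⟨ustar, hmem ε hε.le⟩,
      tendsto_ediam_zero_of_forall_seq_tendsto (x := ustar) fun ε u hε hu => ?_⟩
    obtain ⟨p, hp⟩ := exists_genApproxSeq_of_mem_approxSol (hε.mono_right nhdsWithin_le_nhds) hu
    exact hconv p u hp
  · rintro ⟨hne, hdiam⟩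
    obtain ⟨w, hw⟩ :=
      sepSol_nonempty_of_ediam_approxSol_tendsto_zero hCne hCcl hQne hQcl hfusc hgusc hne hdiam
    have hconv : ∀ p u, GenApproxSeq C Q A pstar r ftil gtil p u → Tendsto u atTop (𝓝 w) := by
      intro p u hu
      obtain ⟨δ, hδ, hmem⟩ := hu.exists_mem_approxSol
      exact tendsto_of_ediam_tendsto_zero
        (fun n => sepSol_subset_approxSol hr.le (nonneg_of_mem_approxSol (hmem n)) hw) hmem
        (hdiam.comp hδ)
    refine ⟨w, eq_singleton_iff_unique_mem.2 ⟨hw, fun z hz => ?_⟩, hconv⟩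
    obtain ⟨p, hp⟩ := exists_genApproxSeq_of_mem_approxSol (u := fun _ => z) tendsto_const_nhds
      fun _ => sepSol_subset_approxSol hr.le le_rfl hz
    exact tendsto_const_nhds_iff.1 (hconv p _ hp)

/-- **Theorem 4.2.** If the perturbed bifunctions are upper semicontinuous in their first
two variables, then SEP(f,g,C,Q) is Levitin–Polyak well-posed by perturbations if and
only if S(ε) ≠ ∅ for every ε > 0 and diam(S(ε)) → 0 as ε → 0⁺. -/
theorem sep_lp_wellposed_iff_approx_nonempty_diam_tendsto_zero
    {E₁ E₂ N : Type*} [NormedAddCommGroup E₁] [NormedSpace ℝ E₁] [CompleteSpace E₁]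
    [NormedAddCommGroup E₂] [NormedSpace ℝ E₂] [CompleteSpace E₂]
    [NormedAddCommGroup N] [NormedSpace ℝ N]
    (C : Set E₁) (Q : Set E₂) (hCne : C.Nonempty) (hCcl : IsClosed C) (hCcv : Convex ℝ C)
    (hQne : Q.Nonempty) (hQcl : IsClosed Q) (hQcv : Convex ℝ Q)
    (A : E₁ →L[ℝ] E₂) (pstar : N) (r : ℝ) (hr : 0 < r)
    (ftil : N → E₁ → E₁ → ℝ) (gtil : N → E₂ → E₂ → ℝ)
    (hfusc : ∀ x : E₁, UpperSemicontinuous fun q : N × E₁ => ftil q.1 q.2 x)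
    (hgusc : ∀ y : E₂, UpperSemicontinuous fun q : N × E₂ => gtil q.1 q.2 y) :
    LPWellPosedPerturb C Q A pstar r ftil gtil ↔
      (∀ ε : ℝ, 0 < ε → (approxSol C Q A pstar r ftil gtil ε).Nonempty) ∧
        Tendsto (fun ε : ℝ => EMetric.diam (approxSol C Q A pstar r ftil gtil ε))
          (𝓝[>] (0 : ℝ)) (nhds 0) :=
  sep_lp_wellposed_iff_approx_nonempty_diam_tendsto_zero_general C Q hCne hCcl hQne hQcl A pstar r
    hr ftil gtil hfusc hgusc
end

section
/- Assume E₁ and E₂ are finite-dimensional, and that: (i) f̃(p*,·,·) and g̃(p*,·,·) are hemicontinuous; (ii) f̃(p,·,·) and g̃(p,·,·) are monotone for every p ∈ M; (iii) for every p ∈ M and every x ∈ E₁, y ∈ E₂, the functions f̃(p,x,·) and g̃(p,y,·) are convex; (iv) f̃(p*,x,x) ≥ 0 for every x ∈ C and g̃(p*,y,y) ≥ 0 for every y ∈ Q; (v) for every x ∈ E₁ and y ∈ E₂, the maps (p,x') ↦ f̃(p,x,x') and (p,y') ↦ g̃(p,y,y') are continuous. If SEP(f,g,C,Q) has a unique solution,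 then for every sequence {pₙ} ⊆ M with pₙ → p*, every generalized approximating sequence corresponding to {pₙ} is bounded in E₁ × E₂. -/
open Filter Metric Topology Set

/-!
If a generalized approximating sequence `uₙ` were unbounded, infinitely many of its terms would
lie outside the unit ball around the unique solution `u*`; pull them radially back onto the unit
sphere, `u* + tₙ • (uₙ - u*)` with `tₙ = ‖uₙ - u*‖⁻¹ ≤ 1`. By compactness of the sphere a
subsequence converges to some `z` with `‖z - u*‖ = 1`. Because `C`, `Q`, the graph of `A` and
each `f̃(p, x, ·)`, `g̃(p, y, ·)` are convex, the approximate feasibility and (via monotonicity)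
the approximate Minty inequalities survive these convex combinations with `u*`, so in the limit
`z` is feasible and satisfies `f(x, z₁) ≤ 0`, `g(y, z₂) ≤ 0`. Hemicontinuity turns these Minty
inequalities into the equilibrium inequalities, so `z` is a second solution.
-/

def EPSol {E : Type*} (C : Set E) (f : E → E → ℝ) : Set E :=
  {x | x ∈ C ∧ ∀ y ∈ C, 0 ≤ f x y}

lemma Real.limsup_nonneg_of_eventually_nonneg {ι : Type*} {l : Filter ι} [l.NeBot]
    {u : ι → ℝ} (hu : ∀ᶠ i in l, 0 ≤ u i) : 0 ≤ limsup u l := by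
  by_cases hb : l.IsBoundedUnder (· ≤ ·) u
  · exact le_limsup_of_frequently_le hu.frequently hb
  · rw [Real.limsup_of_not_isBoundedUnder hb]

lemma frequently_le_dist_of_not_isBounded_range {α : Type*} [PseudoMetricSpace α] {u : ℕ → α}
    (hu : ¬ Bornology.IsBounded (range u)) (a : α) (R : ℝ) :
    ∃ᶠ k in atTop, R ≤ dist (u k) a := by
  contrapose! hu
  obtain ⟨N, hN⟩ := eventually_atTop.1 hu
  refine (((finite_lt_nat N).image u).isBounded.union (isBounded_ball (x := a) (r := R))).subset ?_
  rintro _ ⟨k, rfl⟩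
  rcases lt_or_ge k N with hk | hk
  · exact Or.inl (mem_image_of_mem u hk)
  · exact Or.inr (mem_ball.2 (hN k hk))

section Convexity

variable {E : Type*} [AddCommGroup E] [Module ℝ E]

lemma ConvexOn.map_add_smul_sub_le {s : Set E} {h : E → ℝ} (hh : ConvexOn ℝ s h) {a w : E}
    (ha : a ∈ s) (hw : w ∈ s) {t : ℝ} (ht : t ∈ Icc (0 : ℝ) 1) :
    h (a + t • (w - a)) ≤ (1 - t) * h a + t * h w := by
  have key := hh.2 ha hw (sub_nonneg.2 ht.2) ht.1 (sub_add_cancel 1 t)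
  rwa [show (1 - t) • a + t • w = a + t • (w - a) by module] at key

theorem mem_EPSol_of_minty {C : Set E} {f : E → E → ℝ} (hC : Convex ℝ C)
    (hhemi : ∀ x y : E, limsup (fun t : ℝ => f (x + t • (y - x)) y) (𝓝[>] 0) ≤ f x y)
    (hconv : ∀ x, ConvexOn ℝ univ (f x)) (hdiag : ∀ x ∈ C, 0 ≤ f x x)
    {z : E} (hz : z ∈ C) (hminty : ∀ x ∈ C, f x z ≤ 0) : z ∈ EPSol C f := by
  refine ⟨hz, fun x hx => ?_⟩
  have hsegment : ∀ᶠ s in 𝓝[>] (0 : ℝ), 0 ≤ f (z + s • (x - z)) x := by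
    filter_upwards [Ioc_mem_nhdsGT zero_lt_one] with s hs
    have hs' : s ∈ Icc (0 : ℝ) 1 := Ioc_subset_Icc_self hs
    have hw : z + s • (x - z) ∈ C := hC.add_smul_sub_mem hz hx hs'
    have hsplit := (hconv (z + s • (x - z))).map_add_smul_sub_le (mem_univ z) (mem_univ x) hs'
    have hleft := mul_nonpos_of_nonneg_of_nonpos (sub_nonneg.2 hs.2) (hminty _ hw)
    exact nonneg_of_mul_nonneg_right (by linarith [hdiag _ hw]) hs.1
  exact (Real.limsup_nonneg_of_eventually_nonneg hsegment).trans (hhemi z x)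

end Convexity

section Limits

variable {E : Type*} [NormedAddCommGroup E] [NormedSpace ℝ E] {C : Set E}
  {ι : Type*} {l : Filter ι}

lemma Convex.infDist_add_smul_sub_le (hC : Convex ℝ C) {a : E} (ha : a ∈ C) {t : ℝ}
    (ht : t ∈ Icc (0 : ℝ) 1) (w : E) : infDist (a + t • (w - a)) C ≤ infDist w C := by
  refine (le_infDist ⟨a, ha⟩).2 fun c hc => ?_
  calc infDist (a + t • (w - a)) C ≤ dist (a + t • (w - a)) (a + t • (c - a)) :=
        infDist_le_dist_of_mem (hC.add_smul_sub_mem ha hc ht)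
    _ = t * dist w c := by
        rw [dist_add_left, dist_smul₀, dist_sub_right, Real.norm_of_nonneg ht.1]
    _ ≤ dist w c := mul_le_of_le_one_left dist_nonneg ht.2

lemma IsClosed.mem_of_tendsto_add_smul_sub [l.NeBot] (hCcl : IsClosed C) (hCcv : Convex ℝ C)
    {a : E} (ha : a ∈ C) {w : ι → E} {δ t : ι → ℝ} {z : E}
    (hwC : ∀ k, infDist (w k) C ≤ δ k) (hδ : Tendsto δ l (𝓝 0)) (ht : ∀ k, t k ∈ Icc (0 : ℝ) 1)
    (hz : Tendsto (fun k => a + t k • (w k - a)) l (𝓝 z)) : z ∈ C := by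
  rw [hCcl.mem_iff_infDist_zero ⟨a, ha⟩]
  refine le_antisymm ?_ infDist_nonneg
  exact le_of_tendsto_of_tendsto' (((continuous_infDist_pt C).tendsto z).comp hz) hδ
    fun k => (hCcv.infDist_add_smul_sub_le ha (ht k) (w k)).trans (hwC k)

lemma forall_nonpos_of_tendsto_add_smul_sub [l.NeBot] {N : Type*} [TopologicalSpace N]
    {M : Set N} {pstar : N} (hpstar : pstar ∈ M) {F : N → E → E → ℝ}
    (hmono : ∀ p ∈ M, ∀ x y : E, F p x y + F p y x ≤ 0)
    (hconv : ∀ p ∈ M, ∀ x : E, ConvexOn ℝ univ (F p x))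
    (hcont : ∀ x : E, Continuous fun q : N × E => F q.1 x q.2)
    {a : E} (ha : ∀ x ∈ C, 0 ≤ F pstar a x)
    {q : ι → N} (hqM : ∀ k, q k ∈ M) (hq : Tendsto q l (𝓝 pstar))
    {w : ι → E} {δ t : ι → ℝ} (hδ0 : ∀ k, 0 ≤ δ k) (hδ : Tendsto δ l (𝓝 0))
    (hwF : ∀ k, ∀ x ∈ C, -δ k ≤ F (q k) (w k) x) (ht : ∀ k, t k ∈ Icc (0 : ℝ) 1) {z : E}
    (hz : Tendsto (fun k => a + t k • (w k - a)) l (𝓝 z)) :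
    ∀ x ∈ C, F pstar x z ≤ 0 := by
  intro x hx
  -- `(1 - t) F(q, x, a) ≤ max (F(q, x, a)) 0`, and the right side tends to
  -- `max (F(p*, x, a)) 0 = 0` since `a` solves the unperturbed problem and `F p*` is monotone.
  have hbound : ∀ k, F (q k) x (a + t k • (w k - a)) ≤ max (F (q k) x a) 0 + δ k := by
    intro k
    have hw : F (q k) x (w k) ≤ δ k := by
      linarith [hmono (q k) (hqM k) (w k) x, hwF k x hx]
    have hsplit := (hconv (q k) (hqM k) x).map_add_smul_sub_le (mem_univ a) (mem_univ (w k)) (ht k)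
    have hfirst : (1 - t k) * F (q k) x a ≤ max (F (q k) x a) 0 := by
      nlinarith [mul_nonneg (sub_nonneg.2 (ht k).2) (sub_nonneg.2 (le_max_left (F (q k) x a) 0)),
        mul_nonneg (ht k).1 (le_max_right (F (q k) x a) 0)]
    have hsecond : t k * F (q k) x (w k) ≤ δ k :=
      (mul_le_mul_of_nonneg_left hw (ht k).1).trans (mul_le_of_le_one_left (hδ0 k) (ht k).2)
    linarith
  have hlhs : Tendsto (fun k => F (q k) x (a + t k • (w k - a))) l (𝓝 (F pstar x z)) :=
    ((hcont x).tendsto (pstar, z)).comp (hq.prodMk_nhds hz)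
  have hrhs : Tendsto (fun k => max (F (q k) x a) 0 + δ k) l (𝓝 (max (F pstar x a) 0 + 0)) :=
    ((((hcont x).tendsto (pstar, a)).comp (hq.prodMk_nhds tendsto_const_nhds)).max
      tendsto_const_nhds).add hδ
  have hxa : F pstar x a ≤ 0 := by linarith [hmono pstar hpstar a x, ha x hx]
  calc F pstar x z ≤ max (F pstar x a) 0 + 0 := le_of_tendsto_of_tendsto' hlhs hrhs hbound
    _ = 0 := by rw [max_eq_right hxa, add_zero]

theorem mem_EPSol_of_tendsto_add_smul_sub [l.NeBot] (hCcl : IsClosed C) (hCcv : Convex ℝ C)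
    {N : Type*} [TopologicalSpace N] {M : Set N} {pstar : N} (hpstar : pstar ∈ M)
    {F : N → E → E → ℝ}
    (hhemi : ∀ x y : E,
      limsup (fun t : ℝ => F pstar (x + t • (y - x)) y) (𝓝[>] (0 : ℝ)) ≤ F pstar x y)
    (hmono : ∀ p ∈ M, ∀ x y : E, F p x y + F p y x ≤ 0)
    (hconv : ∀ p ∈ M, ∀ x : E, ConvexOn ℝ univ (F p x))
    (hdiag : ∀ x ∈ C, 0 ≤ F pstar x x)
    (hcont : ∀ x : E, Continuous fun q : N × E => F q.1 x q.2)
    {a : E} (ha : a ∈ EPSol C (F pstar))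
    {q : ι → N} (hqM : ∀ k, q k ∈ M) (hq : Tendsto q l (𝓝 pstar))
    {w : ι → E} {δ t : ι → ℝ} (hδ : Tendsto δ l (𝓝 0)) (hwC : ∀ k, infDist (w k) C ≤ δ k)
    (hwF : ∀ k, ∀ x ∈ C, -δ k ≤ F (q k) (w k) x) (ht : ∀ k, t k ∈ Icc (0 : ℝ) 1) {z : E}
    (hz : Tendsto (fun k => a + t k • (w k - a)) l (𝓝 z)) :
    z ∈ EPSol C (F pstar) :=
  mem_EPSol_of_minty hCcv hhemi (hconv pstar hpstar) hdiag
    (hCcl.mem_of_tendsto_add_smul_sub hCcv ha.1 hwC hδ ht hz)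
    (forall_nonpos_of_tendsto_add_smul_sub hpstar hmono hconv hcont ha.2 hqM hq
      (fun k => infDist_nonneg.trans (hwC k)) hδ hwF ht hz)

lemma ContinuousLinearMap.eq_of_tendsto_add_smul_sub [l.NeBot] {F : Type*}
    [NormedAddCommGroup F] [NormedSpace ℝ F] (A : E →L[ℝ] F) {a : E × F} (ha : a.2 = A a.1)
    {w : ι → E × F} {δ t : ι → ℝ} (hwA : ∀ k, ‖(w k).2 - A (w k).1‖ ≤ δ k)
    (hδ : Tendsto δ l (𝓝 0)) (ht : ∀ k, t k ∈ Icc (0 : ℝ) 1) {z : E × F}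
    (hz : Tendsto (fun k => a + t k • (w k - a)) l (𝓝 z)) : z.2 = A z.1 := by
  have hclosed : IsClosed ((A : E →ₗ[ℝ] F).graph : Set (E × F)) :=
    isClosed_eq continuous_snd (A.continuous.comp continuous_fst)
  refine hclosed.mem_of_tendsto_add_smul_sub (Submodule.convex _) ha (fun k => ?_) hδ ht hz
  calc infDist (w k) ((A : E →ₗ[ℝ] F).graph : Set (E × F))
        ≤ dist (w k) ((w k).1, A (w k).1) := infDist_le_dist_of_mem rfl
    _ = ‖(w k).2 - A (w k).1‖ := by
        rw [Prod.dist_eq, dist_self, max_eq_right dist_nonneg, dist_eq_norm]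
    _ ≤ δ k := hwA k

lemma exists_subseq_tendsto_sphere_of_frequently_one_le [ProperSpace E] {a : E} {u : ℕ → E}
    (hu : ∃ᶠ k in atTop, 1 ≤ ‖u k - a‖) :
    ∃ φ : ℕ → ℕ, StrictMono φ ∧ ∃ t : ℕ → ℝ, (∀ k, t k ∈ Icc (0 : ℝ) 1) ∧
      ∃ z ∈ sphere a 1, Tendsto (fun k => a + t k • (u (φ k) - a)) atTop (𝓝 z) := by
  obtain ⟨φ, hφ, hfar⟩ := extraction_of_frequently_atTop hu
  have hsphere : ∀ k, a + ‖u (φ k) - a‖⁻¹ • (u (φ k) - a) ∈ sphere a 1 := fun k => by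
    rw [mem_sphere_iff_norm, add_sub_cancel_left, norm_smul, norm_inv, norm_norm,
      inv_mul_cancel₀ (one_pos.trans_le (hfar k)).ne']
  obtain ⟨z, hz, ψ, hψ, hlim⟩ := (isCompact_sphere a 1).tendsto_subseq hsphere
  exact ⟨φ ∘ ψ, hφ.comp hψ, fun k => ‖u (φ (ψ k)) - a‖⁻¹,
    fun k => ⟨inv_nonneg.2 (norm_nonneg _), inv_le_one_of_one_le₀ (hfar (ψ k))⟩, z, hz, hlim⟩

end Limits

theorem sep_genApproxSeq_bounded_of_existsUnique_general
    {E₁ E₂ N : Type*} [NormedAddCommGroup E₁] [NormedSpace ℝ E₁]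
    [NormedAddCommGroup E₂] [NormedSpace ℝ E₂]
    [NormedAddCommGroup N] [NormedSpace ℝ N]
    (C : Set E₁) (Q : Set E₂) (hCcl : IsClosed C) (hCcv : Convex ℝ C)
    (hQcl : IsClosed Q) (hQcv : Convex ℝ Q)
    (A : E₁ →L[ℝ] E₂) (pstar : N) (r : ℝ)
    (ftil : N → E₁ → E₁ → ℝ) (gtil : N → E₂ → E₂ → ℝ)
    [FiniteDimensional ℝ E₁] [FiniteDimensional ℝ E₂]
    (hfhemi : ∀ x y : E₁,
      limsup (fun t : ℝ => ftil pstar (x + t • (y - x)) y) (𝓝[>] (0 : ℝ)) ≤ ftil pstar x y)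
    (hghemi : ∀ x y : E₂,
      limsup (fun t : ℝ => gtil pstar (x + t • (y - x)) y) (𝓝[>] (0 : ℝ)) ≤ gtil pstar x y)
    (hfmono : ∀ p : N, ‖p - pstar‖ ≤ r → ∀ x y : E₁, ftil p x y + ftil p y x ≤ 0)
    (hgmono : ∀ p : N, ‖p - pstar‖ ≤ r → ∀ x y : E₂, gtil p x y + gtil p y x ≤ 0)
    (hfconv : ∀ p : N, ‖p - pstar‖ ≤ r → ∀ x : E₁, ConvexOn ℝ Set.univ (ftil p x))
    (hgconv : ∀ p : N, ‖p - pstar‖ ≤ r → ∀ y : E₂, ConvexOn ℝ Set.univ (gtil p y))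
    (hfdiag : ∀ x ∈ C, 0 ≤ ftil pstar x x)
    (hgdiag : ∀ y ∈ Q, 0 ≤ gtil pstar y y)
    (hfcont : ∀ x : E₁, Continuous fun q : N × E₁ => ftil q.1 x q.2)
    (hgcont : ∀ y : E₂, Continuous fun q : N × E₂ => gtil q.1 y q.2)
    (huniq : ∃! u : E₁ × E₂, u ∈ SEPSol C Q A (ftil pstar) (gtil pstar)) :
    ∀ (p : ℕ → N) (u : ℕ → E₁ × E₂), GenApproxSeq C Q A pstar r ftil gtil p u →
      Bornology.IsBounded (Set.range u) := by
  rintro p u ⟨hpM, hp, ε, -, hε, hu⟩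
  obtain ⟨a, ⟨ha₁, ha₂, haA, haf, hag⟩, huniq⟩ := huniq
  have hpstar : ‖pstar - pstar‖ ≤ r := by simpa using (norm_nonneg _).trans (hpM 0)
  by_contra hunbdd
  obtain ⟨φ, hφ, t, ht, z, hz, hlim⟩ := exists_subseq_tendsto_sphere_of_frequently_one_le
    (by simpa only [dist_eq_norm] using frequently_le_dist_of_not_isBounded_range hunbdd a 1)
  have hφ' := hφ.tendsto_atTop
  have hz₁ : z.1 ∈ EPSol C (ftil pstar) :=
    mem_EPSol_of_tendsto_add_smul_sub hCcl hCcv (M := {p | ‖p - pstar‖ ≤ r}) hpstar hfhemi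
      hfmono hfconv hfdiag hfcont ⟨ha₁, haf⟩ (fun k => hpM (φ k)) (hp.comp hφ')
      (hε.comp hφ') (fun k => (hu (φ k)).1) (fun k => (hu (φ k)).2.2.2.1) ht
      ((continuous_fst.tendsto z).comp hlim)
  have hz₂ : z.2 ∈ EPSol Q (gtil pstar) :=
    mem_EPSol_of_tendsto_add_smul_sub hQcl hQcv (M := {p | ‖p - pstar‖ ≤ r}) hpstar hghemi
      hgmono hgconv hgdiag hgcont ⟨ha₂, hag⟩ (fun k => hpM (φ k)) (hp.comp hφ')
      (hε.comp hφ') (fun k => (hu (φ k)).2.1) (fun k => (hu (φ k)).2.2.2.2) ht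
      ((continuous_snd.tendsto z).comp hlim)
  have hzA : z.2 = A z.1 :=
    A.eq_of_tendsto_add_smul_sub haA (fun k => (hu (φ k)).2.2.1) (hε.comp hφ') ht hlim
  exact ne_of_mem_sphere hz one_ne_zero (huniq z ⟨hz₁.1, hz₂.1, hzA, hz₁.2, hz₂.2⟩)

/-- In finite dimensions, under hemicontinuity, monotonicity, convexity, diagonal
nonnegativity and continuity assumptions, if SEP(f,g,C,Q) has a unique solution then
every generalized approximating sequence is bounded. -/
theorem sep_genApproxSeq_bounded_of_existsUnique
    {E₁ E₂ N : Type*} [NormedAddCommGroup E₁] [NormedSpace ℝ E₁] [CompleteSpace E₁]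
    [NormedAddCommGroup E₂] [NormedSpace ℝ E₂] [CompleteSpace E₂]
    [NormedAddCommGroup N] [NormedSpace ℝ N]
    (C : Set E₁) (Q : Set E₂) (hCne : C.Nonempty) (hCcl : IsClosed C) (hCcv : Convex ℝ C)
    (hQne : Q.Nonempty) (hQcl : IsClosed Q) (hQcv : Convex ℝ Q)
    (A : E₁ →L[ℝ] E₂) (pstar : N) (r : ℝ) (hr : 0 < r)
    (ftil : N → E₁ → E₁ → ℝ) (gtil : N → E₂ → E₂ → ℝ)
    [FiniteDimensional ℝ E₁] [FiniteDimensional ℝ E₂]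
    (hfhemi : ∀ x y : E₁,
      limsup (fun t : ℝ => ftil pstar (x + t • (y - x)) y) (𝓝[>] (0 : ℝ)) ≤ ftil pstar x y)
    (hghemi : ∀ x y : E₂,
      limsup (fun t : ℝ => gtil pstar (x + t • (y - x)) y) (𝓝[>] (0 : ℝ)) ≤ gtil pstar x y)
    (hfmono : ∀ p : N, ‖p - pstar‖ ≤ r → ∀ x y : E₁, ftil p x y + ftil p y x ≤ 0)
    (hgmono : ∀ p : N, ‖p - pstar‖ ≤ r → ∀ x y : E₂, gtil p x y + gtil p y x ≤ 0)
    (hfconv : ∀ p : N, ‖p - pstar‖ ≤ r → ∀ x : E₁, ConvexOn ℝ Set.univ (ftil p x))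
    (hgconv : ∀ p : N, ‖p - pstar‖ ≤ r → ∀ y : E₂, ConvexOn ℝ Set.univ (gtil p y))
    (hfdiag : ∀ x ∈ C, 0 ≤ ftil pstar x x)
    (hgdiag : ∀ y ∈ Q, 0 ≤ gtil pstar y y)
    (hfcont : ∀ x : E₁, Continuous fun q : N × E₁ => ftil q.1 x q.2)
    (hgcont : ∀ y : E₂, Continuous fun q : N × E₂ => gtil q.1 y q.2)
    (huniq : ∃! u : E₁ × E₂, u ∈ SEPSol C Q A (ftil pstar) (gtil pstar)) :
    ∀ (p : ℕ → N) (u : ℕ → E₁ × E₂), GenApproxSeq C Q A pstar r ftil gtil p u →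
      Bornology.IsBounded (Set.range u) :=
  sep_genApproxSeq_bounded_of_existsUnique_general C Q hCcl hCcv hQcl hQcv A pstar r ftil gtil
    hfhemi hghemi hfmono hgmono hfconv hgconv hfdiag hgdiag hfcont hgcont huniq
end
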